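/- Call a set G of mappings from Y₁ to Y₂ a separated mapping set if for all g₁, g₂ ∈ G and all y ∈ Y₁, g₁(y) = g₂(y) implies g₁ = g₂. Let X̄ = X ∪ {∂} and let M ⊆ X^X. If G is a set of self-mappings on X̄ such that every g ∈ G equals m←_S for some m ∈ M and S ⊆ X, and M is a separated mapping set, then G is a (∂)-separated mapping set: for any g₁, g₂ ∈ G, the restrictions of g₁ and g₂ to g₁⁻¹(X) ∩ g₂⁻¹(X) form a separated pair (they agree at one point of this set only if they agree on all of it). -/
import Mathlib


open scoped Classical

/-- A set of mappings is separated if any two of its elements agreeing at one point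
are equal. -/
def SeparatedMappingSet {Y₁ Y₂ : Type*} (G : Set (Y₁ → Y₂)) : Prop :=
  ∀ g₁ ∈ G, ∀ g₂ ∈ G, ∀ y : Y₁, g₁ y = g₂ y → g₁ = g₂

/-- Backward mapping `m←_S : X̄ → X̄` (`∂` encoded by `none`). -/
noncomputable def backward {X : Type*} (m : X → X) (S : Finset X) :
    Option X → Option X
  | none => none
  | some x => if x ∈ S then some (m x) else none

/-- If every element of `G` is a backward mapping `m←_S` with `m ∈ M` and `S ⊆ X`,
and `M` is a separated mapping set, then `G` is a `(∂)`-separated mapping set: for any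
`g₁, g₂ ∈ G`, if they agree at one point of `g₁⁻¹(X) ∩ g₂⁻¹(X)` then they agree on the
whole of `g₁⁻¹(X) ∩ g₂⁻¹(X)`. -/
theorem backward_of_separated_is_cemetery_separated {X : Type*} [Fintype X]
    (M : Set (X → X)) (G : Set (Option X → Option X))
    (hG : ∀ g ∈ G, ∃ m ∈ M, ∃ S : Finset X, g = backward m S)
    (hM : SeparatedMappingSet M) :
    ∀ g₁ ∈ G, ∀ g₂ ∈ G,
      ∀ y : Option X, (g₁ y ≠ none ∧ g₂ y ≠ none) → g₁ y = g₂ y →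
        ∀ y' : Option X, (g₁ y' ≠ none ∧ g₂ y' ≠ none) → g₁ y' = g₂ y' := by
  intro g₁ hg₁ g₂ hg₂ y ⟨h1, h2⟩ hagree y' ⟨h1', h2'⟩
  obtain ⟨m₁, hm₁, S₁, rfl⟩ := hG g₁ hg₁
  obtain ⟨m₂, hm₂, S₂, rfl⟩ := hG g₂ hg₂
  match y with
  | none => exact absurd rfl h1
  | some x =>
    simp only [backward] at h1 h2 hagree
    by_cases hx1 : x ∈ S₁
    · by_cases hx2 : x ∈ S₂
      · simp only [hx1, hx2, if_true] at hagree
        have : m₁ = m₂ := hM m₁ hm₁ m₂ hm₂ x (Option.some_injective _ hagree)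
        subst this
        match y' with
        | none => exact absurd rfl h1'
        | some x' =>
          simp only [backward] at h1' h2' ⊢
          by_cases hx1' : x' ∈ S₁ <;> by_cases hx2' : x' ∈ S₂ <;>
            simp_all
      · simp [hx2] at h2
    · simp [hx1] at h1
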